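/- arXiv:1610.08219 — 3 statements merged into one kernel-verified Lean document; each statement's English description precedes it below -/
import Mathlib

section
/- For a symmetric probability measure μ_N on X^N with reference product measure μ₀^{⊗N}, the mean entropy is monotone under taking marginals: (1/N) D(μ_N, μ₀^{⊗N}) ≥ (1/j) D((μ_N)_j, μ₀^{⊗j}) for j ≤ N, where (μ_N)_j denotes the j-th marginal of μ_N on X^j. -/
open MeasureTheory

/-- The relative entropy `D(ν,μ) = ∫ log(dν/dμ) dν`. -/
noncomputable def relEnt {α : Type*} [MeasurableSpace α] (ν μ : Measure α) : ℝ :=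
  ∫ x, Real.log (ν.rnDeriv μ x).toReal ∂ν

/-!
Arrange the `N` coordinates on a cycle and consider the `N` cyclic windows of `j` consecutive
coordinates; every coordinate lies in exactly `j` of them. If `g` is the density of the `j`-th
marginal, Finner's inequality (a Hölder inequality for functions of overlapping blocks of
coordinates) shows that `P x = ∏_s g(x|window s)^(1/j)` has total mass at most one under
`μ₀^⊗N`, so Gibbs' inequality gives `∫ log P dμ_N ≤ D(μ_N, μ₀^⊗N)`. By symmetry every window of
`μ_N` has the law `(μ_N)_j`, so the left side is `(N/j) D((μ_N)_j, μ₀^⊗j)`.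
-/

open Finset
open scoped ENNReal

section Finner

variable {ι κ α : Type*} [DecidableEq ι] [MeasurableSpace α] {μ : Measure α}

theorem DependsOn.lmarginal {f : (ι → α) → ℝ≥0∞} {A : Set ι} (hf : DependsOn f A)
    (T : Finset ι) : DependsOn (∫⋯∫⁻_T, f ∂fun _ => μ) A := by
  intro x y hxy
  simp only [MeasureTheory.lmarginal]
  congr with z
  refine hf fun i hi => ?_
  simp only [Function.updateFinset_def]
  split_ifs
  · rfl
  · exact hxy i hi

variable [IsProbabilityMeasure μ]

theorem lintegral_prod_rpow_le_of_sum_filter_eq_one {S : Finset κ} (q : κ → Prop)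
    [DecidablePred q] {p : κ → ℝ} (hp : ∀ s ∈ S, 0 ≤ p s) (hq : ∑ s ∈ S with q s, p s = 1)
    {g : κ → α → ℝ≥0∞} (hg : ∀ s ∈ S, AEMeasurable (g s) μ)
    (hconst : ∀ s ∈ S, ¬ q s → ∃ c, g s = fun _ => c) :
    ∫⁻ y, ∏ s ∈ S, g s y ^ p s ∂μ ≤ ∏ s ∈ S, (∫⁻ y, g s y ∂μ) ^ p s := by
  choose! c hc using hconst
  have hsplit : ∀ y, ∏ s ∈ S, g s y ^ p s
      = (∏ s ∈ S with q s, g s y ^ p s) * ∏ s ∈ S with ¬ q s, c s ^ p s := fun y => by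
    rw [← prod_filter_mul_prod_filter_not S q]
    congr 1
    refine prod_congr rfl fun s hs => ?_
    rw [mem_filter] at hs
    rw [hc s hs.1 hs.2]
  rw [← prod_filter_mul_prod_filter_not S q, lintegral_congr fun y => hsplit y,
    lintegral_mul_const'' _ (f := fun y => ∏ s ∈ S with q s, g s y ^ p s)
      (Finset.aemeasurable_fun_prod _ fun s hs => (hg s (mem_filter.mp hs).1).pow_const _)]
  gcongr ?_ * ?_
  · exact ENNReal.lintegral_prod_norm_pow_le _ (fun s hs => hg s (mem_filter.mp hs).1) hq
      fun s hs => hp s (mem_filter.mp hs).1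
  · refine (prod_congr rfl fun s hs => ?_).le
    rw [mem_filter] at hs
    simp [hc s hs.1 hs.2]

variable {S : Finset κ} {A : κ → Finset ι} {p : κ → ℝ} {f : κ → (ι → α) → ℝ≥0∞}

theorem lmarginal_singleton_prod_rpow_le (hp : ∀ s ∈ S, 0 ≤ p s) {i : ι}
    (hcov : ∑ s ∈ S with i ∈ A s, p s = 1) (hf : ∀ s ∈ S, Measurable (f s))
    (hdep : ∀ s ∈ S, DependsOn (f s) (A s)) :
    ∫⋯∫⁻_{i}, (fun x => ∏ s ∈ S, f s x ^ p s) ∂(fun _ => μ)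
      ≤ fun x => ∏ s ∈ S, (∫⋯∫⁻_{i}, f s ∂(fun _ => μ)) x ^ p s := by
  intro x
  simp only [lmarginal_singleton]
  refine lintegral_prod_rpow_le_of_sum_filter_eq_one (fun s => i ∈ A s) hp hcov
    (fun s hs => ((hf s hs).comp (measurable_update x)).aemeasurable) fun s hs hi => ?_
  refine ⟨f s x, funext fun y => hdep s hs fun k hk => ?_⟩
  exact Function.update_of_ne (show k ≠ i by rintro rfl; exact hi hk) y x

theorem lmarginal_prod_rpow_le (hp : ∀ s ∈ S, 0 ≤ p s)
    (hcov : ∀ i, ∑ s ∈ S with i ∈ A s, p s = 1) (T : Finset ι)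
    (hf : ∀ s ∈ S, Measurable (f s)) (hdep : ∀ s ∈ S, DependsOn (f s) (A s)) :
    ∫⋯∫⁻_T, (fun x => ∏ s ∈ S, f s x ^ p s) ∂(fun _ => μ)
      ≤ fun x => ∏ s ∈ S, (∫⋯∫⁻_T, f s ∂(fun _ => μ)) x ^ p s := by
  induction T using Finset.induction generalizing f with
  | empty => simp
  | insert i T hi ih =>
    have hunion : ∀ {F : (ι → α) → ℝ≥0∞}, Measurable F →
        ∫⋯∫⁻_insert i T, F ∂(fun _ => μ)
          = ∫⋯∫⁻_T, ∫⋯∫⁻_{i}, F ∂(fun _ => μ) ∂(fun _ => μ) := fun hF => by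
      rw [insert_eq, lmarginal_union' _ _ hF (disjoint_singleton_left.mpr hi)]
    calc ∫⋯∫⁻_insert i T, (fun x => ∏ s ∈ S, f s x ^ p s) ∂(fun _ => μ)
        = ∫⋯∫⁻_T, ∫⋯∫⁻_{i}, (fun x => ∏ s ∈ S, f s x ^ p s) ∂(fun _ => μ) ∂(fun _ => μ) :=
          hunion (Finset.measurable_prod _ fun s hs => (hf s hs).pow_const _)
      _ ≤ ∫⋯∫⁻_T, (fun x => ∏ s ∈ S, (∫⋯∫⁻_{i}, f s ∂(fun _ => μ)) x ^ p s)
            ∂(fun _ => μ) :=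
          lmarginal_mono (lmarginal_singleton_prod_rpow_le hp (hcov i) hf hdep)
      _ ≤ fun x => ∏ s ∈ S, (∫⋯∫⁻_T, ∫⋯∫⁻_{i}, f s ∂(fun _ => μ) ∂(fun _ => μ)) x ^ p s :=
          ih (fun s hs => (hf s hs).lmarginal _) fun s hs => (hdep s hs).lmarginal _
      _ = fun x => ∏ s ∈ S, (∫⋯∫⁻_insert i T, f s ∂(fun _ => μ)) x ^ p s := by
          ext x
          refine prod_congr rfl fun s hs => ?_
          rw [hunion (hf s hs)]

/-- Finner's inequality. -/
theorem lintegral_pi_prod_rpow_le [Fintype ι] (hp : ∀ s ∈ S, 0 ≤ p s)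
    (hcov : ∀ i, ∑ s ∈ S with i ∈ A s, p s = 1) (hf : ∀ s ∈ S, Measurable (f s))
    (hdep : ∀ s ∈ S, DependsOn (f s) (A s)) :
    ∫⁻ x, ∏ s ∈ S, f s x ^ p s ∂(Measure.pi fun _ : ι => μ)
      ≤ ∏ s ∈ S, (∫⁻ x, f s x ∂(Measure.pi fun _ : ι => μ)) ^ p s := by
  have : Nonempty α := nonempty_of_isProbabilityMeasure μ
  obtain ⟨x⟩ : Nonempty (ι → α) := inferInstance
  simp_rw [lintegral_eq_lmarginal_univ x]
  exact lmarginal_prod_rpow_le hp hcov univ hf hdep x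

end Finner

theorem integral_log_le_relEnt {α : Type*} [MeasurableSpace α] {ν μ : Measure α}
    [IsProbabilityMeasure ν] [SigmaFinite μ] (hνμ : ν ≪ μ)
    (hint : Integrable (fun x => Real.log (ν.rnDeriv μ x).toReal) ν) {h : α → ℝ≥0∞}
    (hh : Measurable h) (h_le : ∫⁻ x, h x ∂μ ≤ 1) (h_pos : ∀ᵐ x ∂ν, 0 < h x)
    (hint_h : Integrable (fun x => Real.log (h x).toReal) ν) :
    ∫ x, Real.log (h x).toReal ∂ν ≤ relEnt ν μ := by
  set g := ν.rnDeriv μ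
  have hg : Measurable g := Measure.measurable_rnDeriv ν μ
  have h_div : Measurable fun x => h x / g x := hh.div hg
  have h_fin : ∀ᵐ x ∂ν, h x < ∞ :=
    hνμ.ae_le (ae_lt_top hh (ne_top_of_le_ne_top ENNReal.one_ne_top h_le))
  have h_ratio : ∫⁻ x, h x / g x ∂ν ≤ 1 := calc
    ∫⁻ x, h x / g x ∂ν = ∫⁻ x, g x * (h x / g x) ∂μ := by
      conv_lhs => rw [← Measure.withDensity_rnDeriv_eq ν μ hνμ]
      exact lintegral_withDensity_eq_lintegral_mul μ hg h_div
    _ ≤ ∫⁻ x, h x ∂μ := lintegral_mono fun x => ENNReal.mul_div_le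
    _ ≤ 1 := h_le
  have hint_ratio : Integrable (fun x => (h x / g x).toReal) ν :=
    integrable_toReal_of_lintegral_ne_top h_div.aemeasurable
      (ne_top_of_le_ne_top ENNReal.one_ne_top h_ratio)
  have h_log_le : ∀ᵐ x ∂ν,
      Real.log (h x).toReal - Real.log (g x).toReal ≤ (h x / g x).toReal - 1 := by
    filter_upwards [h_pos, h_fin, Measure.rnDeriv_pos hνμ,
      hνμ.ae_le (Measure.rnDeriv_lt_top ν μ)] with x hx0 hx1 hgx0 hgx1
    rw [← Real.log_div (ENNReal.toReal_pos hx0.ne' hx1.ne).ne'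
      (ENNReal.toReal_pos hgx0.ne' hgx1.ne).ne', ← ENNReal.toReal_div]
    exact Real.log_le_sub_one_of_pos <| ENNReal.toReal_pos
      (ENNReal.div_pos hx0.ne' hgx1.ne).ne' (ENNReal.div_lt_top hx1.ne hgx0.ne').ne
  have h_ratio_fin : ∀ᵐ x ∂ν, h x / g x < ∞ :=
    ae_lt_top h_div (ne_top_of_le_ne_top ENNReal.one_ne_top h_ratio)
  have key : ∫ x, (Real.log (h x).toReal - Real.log (g x).toReal) ∂ν ≤ 0 := calc
    _ ≤ ∫ x, ((h x / g x).toReal - 1) ∂ν :=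
      integral_mono_ae (hint_h.sub hint) (hint_ratio.sub (integrable_const 1)) h_log_le
    _ = (∫⁻ x, h x / g x ∂ν).toReal - 1 := by
      rw [integral_sub hint_ratio (integrable_const 1),
        integral_toReal h_div.aemeasurable h_ratio_fin]
      simp
    _ ≤ 0 := by
      have := ENNReal.toReal_mono ENNReal.one_ne_top h_ratio
      rw [ENNReal.toReal_one] at this
      linarith
  rw [integral_sub hint_h hint] at key
  unfold relEnt
  linarith

open ProbabilityTheory in
theorem MeasureTheory.Measure.map_comp_pi_of_injective {ι ι' α : Type*} [Fintype ι]
    [Fintype ι'] [MeasurableSpace α] (μ : ι → Measure α) [∀ i, IsProbabilityMeasure (μ i)]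
    {e : ι' → ι} (he : Function.Injective e) :
    (Measure.pi μ).map (· ∘ e) = Measure.pi fun t => μ (e t) := by
  have hindep : iIndepFun (fun t (x : ι → α) => x (e t)) (Measure.pi μ) :=
    (iIndepFun_pi (X := fun _ => id) fun _ => aemeasurable_id).precomp he
  rw [show ((· ∘ e) : (ι → α) → ι' → α) = fun x t => x (e t) from rfl,
    hindep.map_fun_eq_pi_map fun t => (measurable_pi_apply (e t)).aemeasurable]
  congr with t : 1
  exact (measurePreserving_eval μ (e t)).map_eq

theorem log_toReal_prod_rpow {κ : Type*} {S : Finset κ} {a : κ → ℝ≥0∞}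
    (ha₀ : ∀ s ∈ S, a s ≠ 0) (ha : ∀ s ∈ S, a s ≠ ∞) (p : κ → ℝ) :
    Real.log (∏ s ∈ S, a s ^ p s).toReal = ∑ s ∈ S, p s * Real.log (a s).toReal := by
  have hpos : ∀ s ∈ S, 0 < (a s).toReal := fun s hs => ENNReal.toReal_pos (ha₀ s hs) (ha s hs)
  simp only [ENNReal.toReal_prod, ← ENNReal.toReal_rpow]
  rw [Real.log_prod fun s hs => (Real.rpow_pos_of_pos (hpos s hs) _).ne']
  exact sum_congr rfl fun s hs => Real.log_rpow (hpos s hs) _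

section Shearer

variable {ι ι' κ α : Type*} [Fintype ι] [Fintype ι'] [MeasurableSpace α]
  {μ₀ : Measure α} [IsProbabilityMeasure μ₀] {ν : Measure (ι → α)}

theorem MeasureTheory.Measure.AbsolutelyContinuous.map_comp_pi
    (hνμ : ν ≪ Measure.pi fun _ => μ₀) {e : ι' → ι} (he : Function.Injective e) :
    ν.map (· ∘ e) ≪ Measure.pi fun _ => μ₀ := by
  rw [← Measure.map_comp_pi_of_injective (fun _ => μ₀) he]
  exact hνμ.map (by fun_prop)

variable [DecidableEq ι] {S : Finset κ} {e : κ → ι' → ι} {p : κ → ℝ}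

theorem lintegral_pi_prod_rnDeriv_map_comp_rpow_le_one [IsProbabilityMeasure ν]
    (hνμ : ν ≪ Measure.pi fun _ => μ₀) (he : ∀ s ∈ S, Function.Injective (e s))
    (hp : ∀ s ∈ S, 0 ≤ p s) (hcov : ∀ i, ∑ s ∈ S with i ∈ univ.image (e s), p s = 1) :
    ∫⁻ x, ∏ s ∈ S, (ν.map (· ∘ e s)).rnDeriv (Measure.pi fun _ => μ₀) (x ∘ e s) ^ p s
      ∂(Measure.pi fun _ => μ₀) ≤ 1 := by
  set g : κ → (ι' → α) → ℝ≥0∞ :=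
    fun s => (ν.map (· ∘ e s)).rnDeriv (Measure.pi fun _ => μ₀)
  have hproj : ∀ s, Measurable fun x : ι → α => x ∘ e s := fun s => by fun_prop
  have hg : ∀ s, Measurable (g s) := fun s => Measure.measurable_rnDeriv _ _
  have hdep : ∀ s ∈ S, DependsOn (fun x => g s (x ∘ e s)) (univ.image (e s)) :=
    fun s _ x y hxy => congrArg (g s) (funext fun t => hxy (e s t) (by simp))
  refine (lintegral_pi_prod_rpow_le (f := fun s x => g s (x ∘ e s)) hp hcov
    (fun s _ => (hg s).comp (hproj s)) hdep).trans (prod_le_one' fun s hs => ?_)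
  rw [← lintegral_map (hg s) (hproj s), Measure.map_comp_pi_of_injective _ (he s hs),
    Measure.lintegral_rnDeriv (hνμ.map_comp_pi (he s hs)),
    Measure.map_apply (hproj s) MeasurableSet.univ, Set.preimage_univ, measure_univ,
    ENNReal.one_rpow]

/-- Shearer's inequality for relative entropy with respect to a product measure. -/
theorem sum_mul_relEnt_map_comp_le_relEnt [IsProbabilityMeasure ν]
    (hνμ : ν ≪ Measure.pi fun _ => μ₀)
    (hint : Integrable (fun x => Real.log (ν.rnDeriv (Measure.pi fun _ => μ₀) x).toReal) ν)
    (he : ∀ s ∈ S, Function.Injective (e s)) (hp : ∀ s ∈ S, 0 ≤ p s)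
    (hcov : ∀ i, ∑ s ∈ S with i ∈ univ.image (e s), p s = 1)
    (hint_s : ∀ s ∈ S, Integrable
      (fun y => Real.log ((ν.map (· ∘ e s)).rnDeriv (Measure.pi fun _ => μ₀) y).toReal)
      (ν.map (· ∘ e s))) :
    ∑ s ∈ S, p s * relEnt (ν.map (· ∘ e s)) (Measure.pi fun _ => μ₀)
      ≤ relEnt ν (Measure.pi fun _ => μ₀) := by
  set g : κ → (ι' → α) → ℝ≥0∞ :=
    fun s => (ν.map (· ∘ e s)).rnDeriv (Measure.pi fun _ => μ₀)
  set P : (ι → α) → ℝ≥0∞ := fun x => ∏ s ∈ S, g s (x ∘ e s) ^ p s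
  have hproj : ∀ s, Measurable fun x : ι → α => x ∘ e s := fun s => by fun_prop
  have hg : ∀ s, Measurable (g s) := fun s => Measure.measurable_rnDeriv _ _
  have hP : Measurable P :=
    Finset.measurable_prod _ fun s _ => ((hg s).comp (hproj s)).pow_const _
  have hpos : ∀ᵐ x ∂ν, ∀ s ∈ S, 0 < g s (x ∘ e s) ∧ g s (x ∘ e s) < ∞ := by
    refine (Filter.eventually_all_finset S).2 fun s hs => ae_of_ae_map (hproj s).aemeasurable
      (p := fun y => 0 < g s y ∧ g s y < ∞) ?_
    have hac := hνμ.map_comp_pi (he s hs)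
    exact (Measure.rnDeriv_pos hac).and (hac.ae_le (Measure.rnDeriv_lt_top _ _))
  have hP_pos : ∀ᵐ x ∂ν, 0 < P x := hpos.mono fun x hx => pos_iff_ne_zero.2 <|
    prod_ne_zero_iff.2 fun s hs => (ENNReal.rpow_pos (hx s hs).1 (hx s hs).2.ne).ne'
  have hlog : ∀ᵐ x ∂ν,
      Real.log (P x).toReal = ∑ s ∈ S, p s * Real.log (g s (x ∘ e s)).toReal :=
    hpos.mono fun x hx =>
      log_toReal_prod_rpow (fun s hs => (hx s hs).1.ne') (fun s hs => (hx s hs).2.ne) p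
  have hint_comp : ∀ s ∈ S, Integrable (fun x => Real.log (g s (x ∘ e s)).toReal) ν :=
    fun s hs => (hint_s s hs).comp_measurable (hproj s)
  have hint_P : Integrable (fun x => Real.log (P x).toReal) ν :=
    (integrable_finsetSum _ fun s hs => (hint_comp s hs).const_mul (p s)).congr
      (hlog.mono fun x hx => hx.symm)
  have hrelEnt : ∀ s, relEnt (ν.map (· ∘ e s)) (Measure.pi fun _ => μ₀)
      = ∫ x, Real.log (g s (x ∘ e s)).toReal ∂ν := fun s =>
    integral_map (hproj s).aemeasurable
      (Real.measurable_log.comp (hg s).ennreal_toReal).aestronglyMeasurable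
  calc ∑ s ∈ S, p s * relEnt (ν.map (· ∘ e s)) (Measure.pi fun _ => μ₀)
      = ∫ x, Real.log (P x).toReal ∂ν := by
        rw [integral_congr_ae hlog,
          integral_finsetSum _ fun s hs => (hint_comp s hs).const_mul _]
        exact sum_congr rfl fun s _ => by rw [integral_const_mul, hrelEnt s]
    _ ≤ relEnt ν (Measure.pi fun _ => μ₀) :=
        integral_log_le_relEnt hνμ hint hP
          (lintegral_pi_prod_rnDeriv_map_comp_rpow_le_one hνμ he hp hcov) hP_pos hint_P

end Shearer

section CyclicWindow

variable {N j : ℕ} (hjN : j ≤ N)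

def cyclicWindow (s : Fin N) (t : Fin j) : Fin N := s + Fin.castLE hjN t

theorem cyclicWindow_injective (s : Fin N) : Function.Injective (cyclicWindow hjN s) :=
  (add_right_injective s).comp (Fin.castLE_injective hjN)

variable [NeZero N]

theorem card_filter_mem_image_cyclicWindow (i : Fin N) :
    #{s | i ∈ univ.image (cyclicWindow hjN s)} = j := by
  have : ({s | i ∈ univ.image (cyclicWindow hjN s)} : Finset (Fin N))
      = univ.image fun t => i - Fin.castLE hjN t := by
    ext s
    simp only [cyclicWindow, mem_filter, mem_univ, true_and, mem_image]
    exact exists_congr fun t => by constructor <;> rintro rfl <;> abel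
  rw [this, card_image_of_injective _ fun _ _ h =>
    Fin.castLE_injective hjN (sub_right_injective h), card_univ, Fintype.card_fin]

theorem map_comp_cyclicWindow_of_perm_invariant {X : Type*} [MeasurableSpace X]
    {μ : Measure (Fin N → X)} (hsym : ∀ σ : Equiv.Perm (Fin N), μ.map (· ∘ σ) = μ)
    (s : Fin N) : μ.map (· ∘ cyclicWindow hjN s) = μ.map (· ∘ Fin.castLE hjN) := by
  have hcomp : (fun x : Fin N → X => x ∘ cyclicWindow hjN s)
      = (· ∘ Fin.castLE hjN) ∘ (· ∘ ⇑(Equiv.addLeft s)) := rfl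
  rw [hcomp, ← Measure.map_map (by fun_prop) (by fun_prop), hsym]

end CyclicWindow

/-- Monotonicity of the mean entropy under marginals: for a symmetric probability
measure `μN` on `X^N`, `(1/N) D(μN, μ₀^{⊗N}) ≥ (1/j) D((μN)_j, μ₀^{⊗j})` where `(μN)_j`
is the `j`-th marginal (pushforward under projection to the first `j` coordinates). -/
theorem stmt4 {X : Type*} [MeasurableSpace X] (μ₀ : Measure X) [IsProbabilityMeasure μ₀]
    (N j : ℕ) (hj : 0 < j) (hjN : j ≤ N)
    (μN : Measure (Fin N → X)) [IsProbabilityMeasure μN]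
    (hsym : ∀ σ : Equiv.Perm (Fin N), Measure.map (fun x => x ∘ σ) μN = μN)
    (hac : μN ≪ Measure.pi (fun _ : Fin N => μ₀))
    (hintN : Integrable
      (fun x => Real.log ((μN.rnDeriv (Measure.pi (fun _ : Fin N => μ₀))) x).toReal) μN)
    (hintj : Integrable
      (fun y => Real.log
        (((Measure.map (fun (x : Fin N → X) (i : Fin j) => x (Fin.castLE hjN i)) μN).rnDeriv
          (Measure.pi (fun _ : Fin j => μ₀))) y).toReal)
      (Measure.map (fun (x : Fin N → X) (i : Fin j) => x (Fin.castLE hjN i)) μN)) :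
    (1 / (j : ℝ)) * relEnt
        (Measure.map (fun (x : Fin N → X) (i : Fin j) => x (Fin.castLE hjN i)) μN)
        (Measure.pi (fun _ : Fin j => μ₀))
      ≤ (1 / (N : ℝ)) * relEnt μN (Measure.pi (fun _ : Fin N => μ₀)) := by
  have : NeZero N := ⟨by omega⟩
  have hmarg := map_comp_cyclicWindow_of_perm_invariant hjN hsym
  have hcov (i : Fin N) :
      ∑ s ∈ univ with i ∈ univ.image (cyclicWindow hjN s), (1 / j : ℝ) = 1 := by
    rw [sum_const, card_filter_mem_image_cyclicWindow, nsmul_eq_mul]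
    field_simp
  have key := sum_mul_relEnt_map_comp_le_relEnt hac hintN
    (fun s _ => cyclicWindow_injective hjN s) (fun _ _ => by positivity) hcov
    fun s _ => by rw [hmarg s]; exact hintj
  simp only [hmarg, sum_const, card_univ, Fintype.card_fin, nsmul_eq_mul] at key
  have hN : (0 : ℝ) < N := by exact_mod_cast NeZero.pos N
  set Dj := relEnt (μN.map (· ∘ Fin.castLE hjN)) (Measure.pi fun _ => μ₀)
  calc 1 / (j : ℝ) * Dj = 1 / N * (N * (1 / j * Dj)) := by field_simp
    _ ≤ 1 / N * relEnt μN (Measure.pi fun _ => μ₀) := by gcongr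
end

section
/- Let X be a compact metric space and W : X² → [0,∞] lower semi-continuous with sup_{x∈X} ∫_X e^{-β₀ W(x,y)} dμ₀(y) < ∞ for some β₀ < 0. Then for any β with β₀ < β < 0, sup_N (1/N) log ∫_{X^N} e^{-β H^{(N)}} dμ₀^{⊗N} < ∞, where H^{(N)} is the renormalized mean field Hamiltonian of W. -/
/-!
Averaging over sites is bounded by the maximum, and the exponential of the maximum by the sum, so
`e^{-β H_N(x)} ≤ ∑ᵢ ∏_{j ≠ i} e^{-β W(xᵢ, xⱼ)}`. In the `i`-th term integrate first over the
`xⱼ`, `j ≠ i`, with `xᵢ` frozen: each factor contributes at most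
`B ≥ sup_x ∫ e^{-β W(x,y)} dμ₀(y)`, finite because `e^{-β W} ≤ e^{-β₀ W}` for `W ≥ 0`.
Hence `Z_N ≤ N B^{N-1} ≤ (2B)^N`.
-/

open MeasureTheory Finset
open scoped ENNReal

lemma Real.exp_mul_average_le_sum_exp {ι : Type*} [Fintype ι] [Nonempty ι] {γ : ℝ} (hγ : 0 ≤ γ)
    (t : ι → ℝ) :
    Real.exp (γ * ((1 / (Fintype.card ι : ℝ)) * ∑ i, t i)) ≤ ∑ i, Real.exp (γ * t i) := by
  obtain ⟨i₀, -, hi₀⟩ := exists_max_image univ t univ_nonempty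
  have haverage : (1 / (Fintype.card ι : ℝ)) * ∑ i, t i ≤ t i₀ := by
    rw [one_div, inv_mul_le_iff₀ (by positivity), ← nsmul_eq_mul, ← card_univ]
    exact sum_le_card_nsmul _ _ _ fun i _ => hi₀ i (mem_univ i)
  calc Real.exp (γ * ((1 / (Fintype.card ι : ℝ)) * ∑ i, t i))
      ≤ Real.exp (γ * t i₀) := Real.exp_le_exp.mpr (mul_le_mul_of_nonneg_left haverage hγ)
    _ ≤ ∑ i, Real.exp (γ * t i) :=
      single_le_sum (f := fun i => Real.exp (γ * t i)) (fun i _ => (Real.exp_pos _).le)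
        (mem_univ i₀)

lemma ENNReal.ofReal_exp_mul_sum_ite_ne {ι : Type*} [Fintype ι] [DecidableEq ι] (c : ℝ) (i : ι)
    (w : ι → ℝ) :
    ENNReal.ofReal (Real.exp (c * ∑ j, if i ≠ j then w j else 0))
      = ∏ j, if i ≠ j then ENNReal.ofReal (Real.exp (c * w j)) else 1 := by
  rw [mul_sum, Real.exp_sum, ENNReal.ofReal_prod_of_nonneg fun j _ => (Real.exp_pos _).le]
  refine prod_congr rfl fun j _ => ?_
  split_ifs <;> simp

lemma lintegral_pi_prod_eq_prod_lintegral {ι : Type*} [Fintype ι] {X : ι → Type*}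
    [∀ i, MeasurableSpace (X i)] (μ : ∀ i, Measure (X i)) [∀ i, IsProbabilityMeasure (μ i)]
    {f : ∀ i, X i → ℝ≥0∞} (hf : ∀ i, Measurable (f i)) :
    ∫⁻ x, ∏ i, f i (x i) ∂Measure.pi μ = ∏ i, ∫⁻ x, f i x ∂μ i := by
  rw [ProbabilityTheory.lintegral_prod_eq_prod_lintegral_of_indepFun univ _
    (ProbabilityTheory.iIndepFun_pi fun i => (hf i).aemeasurable)
    fun i => (hf i).comp (measurable_pi_apply i)]
  refine prod_congr rfl fun i _ => ?_
  exact (measurePreserving_eval μ i).lintegral_comp (hf i)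

section

variable {X : Type*} [MeasurableSpace X]

lemma lintegral_pi_eq_lintegral_insertNth (μ : Measure X) [SigmaFinite μ] {n : ℕ}
    (i : Fin (n + 1)) {F : (Fin (n + 1) → X) → ℝ≥0∞} (hF : Measurable F) :
    ∫⁻ x, F x ∂Measure.pi (fun _ => μ)
      = ∫⁻ a, ∫⁻ y, F (i.insertNth a y) ∂Measure.pi (fun _ => μ) ∂μ := by
  have h := (measurePreserving_piFinSuccAbove (fun _ : Fin (n + 1) => μ) i).symm
  rw [← h.lintegral_comp hF]
  exact lintegral_prod _ (hF.comp h.measurable).aemeasurable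

lemma measurable_prod_ite_ne {g : X → X → ℝ≥0∞} (hg : Measurable fun p : X × X => g p.1 p.2)
    {n : ℕ} (i : Fin n) :
    Measurable fun x : Fin n → X => ∏ j, if i ≠ j then g (x i) (x j) else 1 := by
  refine Finset.measurable_prod _ fun j _ => ?_
  split_ifs
  · exact hg.comp (f := fun x : Fin n → X => (x i, x j)) (by fun_prop)
  · exact measurable_const

lemma lintegral_pi_prod_ite_ne_le (μ : Measure X) [IsProbabilityMeasure μ] {g : X → X → ℝ≥0∞}
    (hg : Measurable fun p : X × X => g p.1 p.2)
    {B : ℝ≥0∞} (hB : ∀ a, ∫⁻ b, g a b ∂μ ≤ B) {n : ℕ} (i : Fin (n + 1)) :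
    ∫⁻ x, ∏ j, (if i ≠ j then g (x i) (x j) else 1) ∂Measure.pi (fun _ => μ) ≤ B ^ n := by
  have hinsert : ∀ a (y : Fin n → X),
      ∏ j, (if i ≠ j then g (i.insertNth a y i) (i.insertNth a y j) else 1) = ∏ k, g a (y k) := by
    intro a y
    simp [Fin.prod_univ_succAbove _ i, Fin.insertNth_apply_succAbove]
  calc ∫⁻ x, ∏ j, (if i ≠ j then g (x i) (x j) else 1) ∂Measure.pi (fun _ => μ)
      = ∫⁻ a, ∏ _k : Fin n, ∫⁻ b, g a b ∂μ ∂μ := by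
        rw [lintegral_pi_eq_lintegral_insertNth μ i (measurable_prod_ite_ne hg i)]
        simp only [hinsert]
        exact lintegral_congr fun a =>
          lintegral_pi_prod_eq_prod_lintegral _ fun _ => hg.comp measurable_prodMk_left
    _ ≤ ∫⁻ _a, B ^ n ∂μ := lintegral_mono fun a => by
        simpa using pow_le_pow_left' (hB a) n
    _ = B ^ n := by simp

end

lemma Real.natCast_succ_mul_pow_le_exp {b : ℝ} (hb : 1 ≤ b) (n : ℕ) :
    ((n + 1 : ℕ) : ℝ) * b ^ n ≤ Real.exp (Real.log (2 * b) * (n + 1 : ℕ)) := by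
  rw [mul_comm (Real.log _), Real.exp_nat_mul, Real.exp_log (by positivity), mul_pow]
  gcongr
  · exact_mod_cast (Nat.lt_two_pow_self).le
  · exact n.le_succ

theorem stmt7_general {X : Type*} [MetricSpace X] [CompactSpace X] [MeasurableSpace X] [BorelSpace X]
    (μ₀ : Measure X) [IsProbabilityMeasure μ₀]
    (W : X → X → ℝ) (hW0 : ∀ x y, 0 ≤ W x y)
    (hWlsc : LowerSemicontinuous (fun p : X × X => W p.1 p.2))
    (β₀ β : ℝ) (hβ₀ : β₀ < β) (hβ : β < 0)
    (A : ℝ≥0∞) (hA : A ≠ ⊤)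
    (hint : ∀ x : X, ∫⁻ y, ENNReal.ofReal (Real.exp (-β₀ * W x y)) ∂μ₀ ≤ A) :
    ∃ c : ℝ, ∀ N : ℕ, 1 ≤ N →
      ∫⁻ x : Fin N → X,
          ENNReal.ofReal (Real.exp (-β * ((1 / (N : ℝ)) *
            ∑ i : Fin N, ∑ j : Fin N, if i ≠ j then W (x i) (x j) else 0)))
          ∂(Measure.pi (fun _ : Fin N => μ₀))
        ≤ ENNReal.ofReal (Real.exp (c * N)) := by
  set b := A.toReal + 1
  have hb : 1 ≤ b := by simp [b]
  set g : X → X → ℝ≥0∞ := fun x y => ENNReal.ofReal (Real.exp (-β * W x y))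
  have hg : Measurable fun p : X × X => g p.1 p.2 := by
    simpa [g] using hWlsc.measurable.const_mul (-β) |>.exp |>.ennreal_ofReal
  have hgb : ∀ x, ∫⁻ y, g x y ∂μ₀ ≤ ENNReal.ofReal b := fun x => calc
    ∫⁻ y, g x y ∂μ₀ ≤ ∫⁻ y, ENNReal.ofReal (Real.exp (-β₀ * W x y)) ∂μ₀ :=
      lintegral_mono fun y => ENNReal.ofReal_le_ofReal <| Real.exp_le_exp.mpr <|
        mul_le_mul_of_nonneg_right (by linarith) (hW0 x y)
    _ ≤ ENNReal.ofReal b := (hint x).trans <| by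
      rw [← ENNReal.ofReal_toReal hA]; exact ENNReal.ofReal_le_ofReal (by linarith)
  refine ⟨Real.log (2 * b), fun N hN => ?_⟩
  obtain ⟨n, rfl⟩ : ∃ n, N = n + 1 := ⟨N - 1, by omega⟩
  calc _ ≤ ∫⁻ x, ∑ i, ∏ j, (if i ≠ j then g (x i) (x j) else 1) ∂Measure.pi (fun _ => μ₀) := by
        refine lintegral_mono fun x => ?_
        have hsite : ∀ i, ∏ j, (if i ≠ j then g (x i) (x j) else 1)
            = ENNReal.ofReal (Real.exp (-β * ∑ j, if i ≠ j then W (x i) (x j) else 0)) :=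
          fun i => (ENNReal.ofReal_exp_mul_sum_ite_ne _ i _).symm
        rw [sum_congr rfl fun i _ => hsite i,
          ← ENNReal.ofReal_sum_of_nonneg fun i _ => (Real.exp_pos _).le]
        refine ENNReal.ofReal_le_ofReal ?_
        simpa using Real.exp_mul_average_le_sum_exp (ι := Fin (n + 1)) (γ := -β) (by linarith)
          fun i => ∑ j, if i ≠ j then W (x i) (x j) else 0
    _ = ∑ i, ∫⁻ x, ∏ j, (if i ≠ j then g (x i) (x j) else 1) ∂Measure.pi (fun _ => μ₀) :=
        lintegral_finsetSum _ fun i _ => measurable_prod_ite_ne hg i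
    _ ≤ ∑ _i : Fin (n + 1), ENNReal.ofReal b ^ n :=
        sum_le_sum fun i _ => lintegral_pi_prod_ite_ne_le μ₀ hg hgb i
    _ = ENNReal.ofReal ((n + 1 : ℕ) * b ^ n) := by
        rw [ENNReal.ofReal_mul (by positivity), ENNReal.ofReal_pow (by positivity),
          ENNReal.ofReal_natCast, sum_const, card_univ, Fintype.card_fin, nsmul_eq_mul]
    _ ≤ _ := ENNReal.ofReal_le_ofReal (Real.natCast_succ_mul_pow_le_exp hb n)

/-- If `W ≥ 0` is lsc and symmetric on a compact metric space and
`sup_x ∫ e^{-β₀ W(x,y)} dμ₀(y) < ∞` for some `β₀ < 0`, then for any `β₀ < β < 0`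
the partition functions satisfy `sup_N (1/N) log Z_{N,β} < ∞`, i.e.
`Z_{N,β} ≤ e^{CN}` for some constant `C`. -/
theorem stmt7 {X : Type*} [MetricSpace X] [CompactSpace X] [MeasurableSpace X] [BorelSpace X]
    (μ₀ : Measure X) [IsProbabilityMeasure μ₀]
    (W : X → X → ℝ) (hW0 : ∀ x y, 0 ≤ W x y)
    (hWlsc : LowerSemicontinuous (fun p : X × X => W p.1 p.2))
    (hWsym : ∀ x y, W x y = W y x)
    (β₀ β : ℝ) (hβ₀ : β₀ < β) (hβ : β < 0)
    (A : ℝ≥0∞) (hA : A ≠ ⊤)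
    (hint : ∀ x : X, ∫⁻ y, ENNReal.ofReal (Real.exp (-β₀ * W x y)) ∂μ₀ ≤ A) :
    ∃ c : ℝ, ∀ N : ℕ, 1 ≤ N →
      ∫⁻ x : Fin N → X,
          ENNReal.ofReal (Real.exp (-β * ((1 / (N : ℝ)) *
            ∑ i : Fin N, ∑ j : Fin N, if i ≠ j then W (x i) (x j) else 0)))
          ∂(Measure.pi (fun _ : Fin N => μ₀))
        ≤ ENNReal.ofReal (Real.exp (c * N)) :=
  stmt7_general μ₀ W hW0 hWlsc β₀ β hβ₀ hβ A hA hint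
end

section
/- Lower bound in Gamma-convergence of mean-field energies: let W : X^m → (−∞, ∞] be lower semi-continuous on a compact metric space X, and let H^{(N)} be the renormalized mean-field Hamiltonian summing W over all m-tuples of distinct indices scaled by N^{−(m−1)}. If x^{(N)} ∈ X^N are configurations whose empirical measures δ_N(x^{(N)}) converge weakly to μ ∈ P(X), then liminf_{N→∞} H^{(N)}(x^{(N)})/N ≥ ∫_{X^m} W dμ^{⊗m}. -/
/-
Truncate `W` at level `n`. Weak convergence of the empirical measures gives weak convergence
of their `m`-fold products, and the portmanteau theorem turns this into
`∫ min W n dμ^{⊗m} ≤ liminf ∫ min W n dδ_N^{⊗m}` since `min W n` is lower semicontinuous.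
The right-hand integral is `N^{-m}` times the sum of `min W n` over *all* multi-indices; the
non-injective ones are a fraction `O(m² / N)` of them and each contributes at most `n`, so they
do not affect the liminf. Monotone convergence in `n` concludes.
-/

open MeasureTheory Filter Topology Finset
open scoped ENNReal

lemma Nat.pow_succ_le_mul_descFactorial_add (N m : ℕ) :
    N ^ (m + 1) ≤ N * N.descFactorial m + m ^ 2 * N ^ m := by
  induction m with
  | zero => simp
  | succ m ih =>
    have hsplit : N * N * N.descFactorial m ≤ N * N.descFactorial (m + 1) + m * N ^ (m + 1) :=
      calc N * N * N.descFactorial m ≤ N * ((N - m) + m) * N.descFactorial m := by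
            gcongr; omega
        _ = N * N.descFactorial (m + 1) + m * (N * N.descFactorial m) := by
            rw [Nat.descFactorial_succ]; ring
        _ ≤ N * N.descFactorial (m + 1) + m * N ^ (m + 1) := by
            rw [pow_succ']; gcongr; exact N.descFactorial_le_pow m
    have hcoef : (m ^ 2 + m) * N ^ (m + 1) ≤ (m + 1) ^ 2 * N ^ (m + 1) := by
      gcongr; nlinarith
    calc N ^ (m + 1 + 1) = N * N ^ (m + 1) := by ring
      _ ≤ N * (N * N.descFactorial m + m ^ 2 * N ^ m) := by gcongr
      _ = N * N * N.descFactorial m + m ^ 2 * N ^ (m + 1) := by ring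
      _ ≤ N * N.descFactorial (m + 1) + (m + 1) ^ 2 * N ^ (m + 1) := by nlinarith

lemma card_filter_not_injective_fin (m N : ℕ) :
    #{I : Fin m → Fin N | ¬ Function.Injective I} = N ^ m - N.descFactorial m := by
  classical
  rw [filter_not, card_sdiff_of_subset (filter_subset _ _), card_univ, Fintype.card_fun,
    ← Fintype.card_subtype, Fintype.card_congr (Equiv.subtypeInjectiveEquivEmbedding _ _),
    Fintype.card_embedding_eq]
  simp

lemma inv_pow_mul_card_filter_not_injective_fin_le {m N : ℕ} (hN : N ≠ 0) :
    ((N : ℝ≥0∞) ^ m)⁻¹ * #{I : Fin m → Fin N | ¬ Function.Injective I}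
      ≤ m ^ 2 * (N : ℝ≥0∞)⁻¹ := by
  have hcount : N * #{I : Fin m → Fin N | ¬ Function.Injective I} ≤ m ^ 2 * N ^ m := by
    rw [card_filter_not_injective_fin, Nat.mul_sub, ← pow_succ']
    have := Nat.pow_succ_le_mul_descFactorial_add N m
    omega
  have hN0 : (N : ℝ≥0∞) ≠ 0 := by exact_mod_cast hN
  rw [ENNReal.inv_mul_le_iff (by simp [hN0]) (by simp), ← mul_assoc, mul_comm _ ((m : ℝ≥0∞) ^ 2),
    ← div_eq_mul_inv, ENNReal.le_div_iff_mul_le (.inl hN0) (.inl (by simp)), mul_comm]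
  exact_mod_cast hcount

lemma tendsto_inv_pow_mul_card_filter_not_injective_fin (m : ℕ) :
    Tendsto (fun N : ℕ => ((N : ℝ≥0∞) ^ m)⁻¹ * #{I : Fin m → Fin N | ¬ Function.Injective I})
      atTop (𝓝 0) := by
  refine tendsto_of_tendsto_of_tendsto_of_le_of_le' tendsto_const_nhds ?_
    (Eventually.of_forall fun N => zero_le)
    ((eventually_ne_atTop 0).mono fun N => inv_pow_mul_card_filter_not_injective_fin_le)
  simpa using ENNReal.Tendsto.const_mul ENNReal.tendsto_inv_nat_nhds_zero (Or.inr (by simp))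

lemma sum_min_le_sum_ite_add {α : Type*} [Fintype α] (p : α → Prop) [DecidablePred p]
    (f : α → ℝ≥0∞) (c : ℝ≥0∞) :
    ∑ a, min (f a) c ≤ (∑ a, if p a then f a else 0) + c * #{a | ¬ p a} :=
  calc ∑ a, min (f a) c ≤ ∑ a, ((if p a then f a else 0) + if p a then 0 else c) :=
        sum_le_sum fun a _ => by split_ifs <;> simp
    _ = (∑ a, if p a then f a else 0) + c * #{a | ¬ p a} := by
        rw [sum_add_distrib]
        simp [sum_ite, mul_comm]

namespace MeasureTheory

section Empirical

variable {ι X : Type*} [Fintype ι] [MeasurableSpace X]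

noncomputable def empiricalMeasure (x : ι → X) : Measure X :=
  (Fintype.card ι : ℝ≥0∞)⁻¹ • ∑ i, Measure.dirac (x i)

lemma empiricalMeasure_apply (x : ι → X) {s : Set X} (hs : MeasurableSet s) :
    empiricalMeasure x s = (Fintype.card ι : ℝ≥0∞)⁻¹ * ∑ i, s.indicator 1 (x i) := by
  simp [empiricalMeasure, Measure.dirac_apply' _ hs]

instance [Nonempty ι] (x : ι → X) : IsProbabilityMeasure (empiricalMeasure x) := by
  constructor
  simp [empiricalMeasure_apply x MeasurableSet.univ, ENNReal.inv_mul_cancel]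

lemma lintegral_empiricalMeasure (x : ι → X) {f : X → ℝ≥0∞} (hf : Measurable f) :
    ∫⁻ a, f a ∂empiricalMeasure x = (Fintype.card ι : ℝ≥0∞)⁻¹ * ∑ i, f (x i) := by
  simp [empiricalMeasure, lintegral_dirac' _ hf]

lemma integral_empiricalMeasure [MeasurableSingletonClass X] (x : ι → X) (f : X → ℝ) :
    ∫ a, f a ∂empiricalMeasure x = (Fintype.card ι : ℝ)⁻¹ * ∑ i, f (x i) := by
  rw [empiricalMeasure, integral_smul_measure,
    integral_finsetSum_measure fun i _ => integrable_dirac (by simp)]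
  simp [integral_dirac]

lemma pi_empiricalMeasure {κ : Type*} [Fintype κ] [DecidableEq κ] [Nonempty ι] (x : ι → X) :
    Measure.pi (fun _ : κ => empiricalMeasure x) = empiricalMeasure (fun I : κ → ι => x ∘ I) := by
  refine Measure.pi_eq fun s hs => ?_
  simp only [empiricalMeasure_apply _ (MeasurableSet.univ_pi hs), empiricalMeasure_apply _ (hs _),
    Finset.prod_mul_distrib, Fintype.prod_sum, Fintype.card_fun, Finset.prod_const,
    Finset.card_univ]
  rw [Nat.cast_pow, ENNReal.inv_pow]
  congr 2 with I
  simpa using Set.indicator_pi_one_apply Finset.univ s (x ∘ I)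

lemma lintegral_pi_empiricalMeasure_min_le {m N : ℕ} [NeZero N]
    (x : Fin N → X) {W : (Fin m → X) → ℝ≥0∞} (hW : Measurable W) (n : ℕ) :
    ∫⁻ y, min (W y) n ∂Measure.pi (fun _ : Fin m => empiricalMeasure x)
      ≤ ((N : ℝ≥0∞) ^ m)⁻¹ *
            ∑ I : Fin m → Fin N, (if Function.Injective I then W (fun k => x (I k)) else 0)
        + n * (((N : ℝ≥0∞) ^ m)⁻¹ * #{I : Fin m → Fin N | ¬ Function.Injective I}) := by
  rw [pi_empiricalMeasure, lintegral_empiricalMeasure _ (hW.min measurable_const),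
    Fintype.card_fun, Fintype.card_fin, Fintype.card_fin, Nat.cast_pow, mul_left_comm, ← mul_add]
  exact mul_le_mul_right (sum_min_le_sum_ite_add _ _ _) _

end Empirical

lemma lintegral_eq_iSup_lintegral_min_natCast {α : Type*} [MeasurableSpace α] {μ : Measure α}
    {f : α → ℝ≥0∞} (hf : Measurable f) :
    ∫⁻ x, f x ∂μ = ⨆ n : ℕ, ∫⁻ x, min (f x) n ∂μ := by
  rw [← lintegral_iSup (fun n => hf.min measurable_const)
    (fun a b hab x => min_le_min le_rfl (Nat.cast_le.mpr hab))]
  congr with x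
  rw [← inf_iSup_eq, ENNReal.iSup_natCast, inf_top_eq]

section Portmanteau

variable {Ω : Type*} [MeasurableSpace Ω] [TopologicalSpace Ω] [OpensMeasurableSpace Ω]

lemma lintegral_le_liminf_lintegral_of_lowerSemicontinuous_of_forall_isOpen
    {μ : Measure Ω} {μs : ℕ → Measure Ω} {f : Ω → ℝ}
    (f_lsc : LowerSemicontinuous f) (f_nn : 0 ≤ f)
    (h_opens : ∀ G, IsOpen G → μ G ≤ atTop.liminf (fun i => μs i G)) :
    ∫⁻ x, ENNReal.ofReal (f x) ∂μ
      ≤ atTop.liminf (fun i => ∫⁻ x, ENNReal.ofReal (f x) ∂(μs i)) := by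
  -- Layer cake: the superlevel sets `{t < f}` are open, and Fatou's lemma integrates over `t`.
  simp_rw [lintegral_eq_lintegral_meas_lt _ (Eventually.of_forall f_nn)
    f_lsc.measurable.aemeasurable]
  calc ∫⁻ t in Set.Ioi 0, μ {a | t < f a}
      ≤ ∫⁻ t in Set.Ioi 0, atTop.liminf (fun i => μs i {a | t < f a}) :=
        lintegral_mono fun t => h_opens _ (lowerSemicontinuous_iff_isOpen_preimage.mp f_lsc t)
    _ ≤ atTop.liminf fun i => ∫⁻ t in Set.Ioi 0, μs i {a | t < f a} :=
        lintegral_liminf_le fun n => Antitone.measurable fun s t hst =>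
          measure_mono fun ω hω => lt_of_le_of_lt hst hω

lemma ProbabilityMeasure.lintegral_le_liminf_lintegral_of_tendsto [HasOuterApproxClosed Ω]
    {μ : ProbabilityMeasure Ω} {μs : ℕ → ProbabilityMeasure Ω} (hμs : Tendsto μs atTop (𝓝 μ))
    {f : Ω → ℝ≥0∞} (hf : LowerSemicontinuous f) :
    ∫⁻ x, f x ∂μ ≤ atTop.liminf (fun i => ∫⁻ x, f x ∂μs i) := by
  rw [lintegral_eq_iSup_lintegral_min_natCast hf.measurable]
  refine iSup_le fun n => ?_
  have hg : LowerSemicontinuous fun x => (min (f x) n).toReal :=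
    (ENNReal.continuousOn_toReal.comp_continuous (continuous_id.min continuous_const)
      fun a => by simp).comp_lowerSemicontinuous hf
      fun a b hab => ENNReal.toReal_mono (by simp) (min_le_min_right _ hab)
  have key := lintegral_le_liminf_lintegral_of_lowerSemicontinuous_of_forall_isOpen hg
    (fun x => ENNReal.toReal_nonneg)
    fun G hG => ProbabilityMeasure.le_liminf_measure_open_of_tendsto hμs hG
  simp only [ENNReal.ofReal_toReal (ne_top_of_le_ne_top (ENNReal.natCast_ne_top n)
    (min_le_right _ _))] at key
  exact key.trans (liminf_le_liminf (Eventually.of_forall fun i =>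
    lintegral_mono fun x => min_le_left _ _))

end Portmanteau

-- Shifted to `N + 1`: the empirical measure of the empty configuration is `0`.
lemma tendsto_empiricalMeasure_succ {X : Type*} [TopologicalSpace X] [MeasurableSpace X]
    [OpensMeasurableSpace X] [MeasurableSingletonClass X] (μ : ProbabilityMeasure X)
    (x : (N : ℕ) → Fin N → X)
    (hx : ∀ g : C(X, ℝ), Tendsto (fun N : ℕ => (1 / (N : ℝ)) * ∑ i : Fin N, g (x N i)) atTop
      (𝓝 (∫ a, g a ∂μ))) :
    Tendsto (β := ProbabilityMeasure X) (fun N => ⟨empiricalMeasure (x (N + 1)), inferInstance⟩)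
      atTop (𝓝 μ) := by
  refine ProbabilityMeasure.tendsto_iff_forall_integral_tendsto.mpr fun f => ?_
  simpa [integral_empiricalMeasure, Function.comp_def] using
    (hx f.toContinuousMap).comp (tendsto_add_atTop_nat 1)

end MeasureTheory

theorem stmt15_general {X : Type*} [MetricSpace X] [CompactSpace X] [MeasurableSpace X] [BorelSpace X]
    (m : ℕ)
    (W : (Fin m → X) → ℝ≥0∞) (hWlsc : LowerSemicontinuous W)
    (μ : Measure X) [IsProbabilityMeasure μ]
    (xN : (N : ℕ) → Fin N → X)
    (hconv : ∀ g : C(X, ℝ),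
      Tendsto (fun N : ℕ => (1 / (N : ℝ)) * ∑ i : Fin N, g (xN N i)) atTop
        (nhds (∫ a, g a ∂μ))) :
    ∫⁻ y, W y ∂(Measure.pi (fun _ : Fin m => μ))
      ≤ atTop.liminf (fun N : ℕ =>
          ((N : ℝ≥0∞) ^ m)⁻¹ *
            ∑ I : Fin m → Fin N,
              if Function.Injective I then W (fun k => xN N (I k)) else 0) := by
  have hν := tendsto_empiricalMeasure_succ ⟨μ, ‹_›⟩ xN hconv
  have hπ := (ProbabilityMeasure.continuous_pi.tendsto _).comp
    (tendsto_pi_nhds.mpr fun _ : Fin m => hν)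
  have hnonInj :=
    (tendsto_inv_pow_mul_card_filter_not_injective_fin m).comp (tendsto_add_atTop_nat 1)
  rw [lintegral_eq_iSup_lintegral_min_natCast hWlsc.measurable, ← liminf_nat_add _ 1]
  refine iSup_le fun n => ?_
  calc ∫⁻ y, min (W y) n ∂Measure.pi (fun _ => μ)
      ≤ atTop.liminf (fun N => ∫⁻ y, min (W y) n
          ∂Measure.pi (fun _ : Fin m => empiricalMeasure (xN (N + 1)))) :=
        ProbabilityMeasure.lintegral_le_liminf_lintegral_of_tendsto hπ
          (hWlsc.inf lowerSemicontinuous_const)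
    _ ≤ atTop.liminf (fun N => ((((N + 1 : ℕ) : ℝ≥0∞) ^ m)⁻¹ * ∑ I : Fin m → Fin (N + 1),
            if Function.Injective I then W (fun k => xN (N + 1) (I k)) else 0) +
          n * ((((N + 1 : ℕ) : ℝ≥0∞) ^ m)⁻¹ *
            #{I : Fin m → Fin (N + 1) | ¬ Function.Injective I})) :=
        liminf_le_liminf (Eventually.of_forall fun N =>
          lintegral_pi_empiricalMeasure_min_le _ hWlsc.measurable n)
    _ = _ := ENNReal.liminf_add_of_right_tendsto_zero
        (by simpa using ENNReal.Tendsto.const_mul hnonInj (Or.inr (ENNReal.natCast_ne_top n))) _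

/-- Lower (liminf) bound in the Gamma-convergence of mean-field energies: for a lower
semi-continuous symmetric interaction `W : X^m → [0,∞]` and configurations `x^{(N)}`
whose empirical measures converge weakly to `μ`, the renormalized mean-field energies
`H^{(N)}(x^{(N)})/N = N^{-m} Σ_{I injective} W(x_{I})` satisfy
`liminf H^{(N)}/N ≥ ∫ W dμ^{⊗m}`. -/
theorem stmt15 {X : Type*} [MetricSpace X] [CompactSpace X] [MeasurableSpace X] [BorelSpace X]
    (m : ℕ) (hm : 1 ≤ m)
    (W : (Fin m → X) → ℝ≥0∞) (hWlsc : LowerSemicontinuous W)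
    (hWsym : ∀ (σ : Equiv.Perm (Fin m)) (y : Fin m → X), W (y ∘ σ) = W y)
    (μ : Measure X) [IsProbabilityMeasure μ]
    (xN : (N : ℕ) → Fin N → X)
    (hconv : ∀ g : C(X, ℝ),
      Tendsto (fun N : ℕ => (1 / (N : ℝ)) * ∑ i : Fin N, g (xN N i)) atTop
        (nhds (∫ a, g a ∂μ))) :
    ∫⁻ y, W y ∂(Measure.pi (fun _ : Fin m => μ))
      ≤ atTop.liminf (fun N : ℕ =>
          ((N : ℝ≥0∞) ^ m)⁻¹ *
            ∑ I : Fin m → Fin N,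
              if Function.Injective I then W (fun k => xN N (I k)) else 0) :=
  stmt15_general m W hWlsc μ xN hconv
end
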